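/- arXiv:2601.04489 — 2 statements merged into one kernel-verified Lean document; each statement's English description precedes it below -/
import Mathlib

section
/- For all y=(y0,y',y'')∈ℝ^{2n+1} and every z0 with 0 < z0 < y0, one has the reproducing identity ∫_{ℝ^{2n}} K_0(z^{-1}·y) K_0(z) dz' dz'' = K_0(y), where z=(z0,z',z'') and z^{-1}·y denotes the group product of z^{-1}=−z with y. -/
/-!
Both heat kernels in `K₀` are products of one-dimensional heat kernels `g_t = heat1 t`, so the
integral splits into coordinates. In `z''` it is the semigroup law
`∫ g_s(A - z) g_t(z) dz = g_{s+t}(A)`.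
What remains in `z'` is, with `a = y₀ - z₀` and `b = z₀`,
`∫ g_a(Y - z) g_b(z) g_{(a³+b³)/12}(c + (a+b)z/2) dz = g_{a+b}(Y) g_{(a+b)³/12}(c + bY/2)`.
Completing the square writes `g_a(Y - z) g_b(z)` as `g_{a+b}(Y)` times a heat kernel in `z` with
parameter `ab/(a+b)`; after rescaling `z ↦ (a+b)z/2` the semigroup law applies once more, and the
parameters add up to the right one because `(a+b)²/4 ⬝ ab/(a+b) + (a³+b³)/12 = (a+b)³/12`.
-/

open MeasureTheory Real Filter Topology

noncomputable section

/-- Points of `ℝ^(2n+1)`, written `y = (y₀, y', y'')`. -/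
abbrev Pt (n : ℕ) : Type := ℝ × (Fin n → ℝ) × (Fin n → ℝ)

/-- The heat kernel `G_t(w)` on `ℝⁿ`. -/
def heatG (n : ℕ) (t : ℝ) (w : Fin n → ℝ) : ℝ :=
  if 0 < t then (4 * π * t) ^ (-(n : ℝ) / 2) * Real.exp (-(∑ i, w i ^ 2) / (4 * t)) else 0

/-- `K₀(y) = G_{y₀}(y') ⬝ G_{y₀³/12}(y'')`. -/
def K0 (n : ℕ) (y : Pt n) : ℝ := heatG n y.1 y.2.1 * heatG n (y.1 ^ 3 / 12) y.2.2

/-- The vector field `Y₀ = ∂_{y₀} - (1/2) Σ_j y'_j ∂_{y''_j}`. -/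
def Y0 {n : ℕ} (φ : Pt n → ℝ) (y : Pt n) : ℝ :=
  fderiv ℝ φ y (1, 0, -(1 / 2 : ℝ) • y.2.1)

/-- The vector field `Y_j = ∂_{y'_j} + (1/2) y₀ ∂_{y''_j}`, `1 ≤ j ≤ n`. -/
def Yp {n : ℕ} (j : Fin n) (φ : Pt n → ℝ) (y : Pt n) : ℝ :=
  fderiv ℝ φ y (0, Pi.single j 1, (y.1 / 2) • (Pi.single j 1 : Fin n → ℝ))

/-- The vector field `Y_{n+j} = ∂_{y''_j}`, `1 ≤ j ≤ n`. -/
def Ypp {n : ℕ} (j : Fin n) (φ : Pt n → ℝ) (y : Pt n) : ℝ :=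
  fderiv ℝ φ y (0, 0, (Pi.single j 1 : Fin n → ℝ))

/-- The step-2 nilpotent group product on `ℝ^(2n+1)`:
`z ⬝ y = (y₀+z₀, y'+z', y''+z''+ (1/2) z₀ y' - (1/2) y₀ z')`. -/
def gmul {n : ℕ} (z y : Pt n) : Pt n :=
  (y.1 + z.1, y.2.1 + z.2.1, y.2.2 + z.2.2 + (z.1 / 2) • y.2.1 - (y.1 / 2) • z.2.1)

def heat1 (t x : ℝ) : ℝ := (√(4 * π * t))⁻¹ * exp (-x ^ 2 / (4 * t))

lemma heat1_neg (t x : ℝ) : heat1 t (-x) = heat1 t x := by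
  simp only [heat1, neg_sq]

lemma integral_heat1 {t : ℝ} (ht : 0 < t) : ∫ x, heat1 t x = 1 := by
  have h : ∀ x : ℝ, -x ^ 2 / (4 * t) = -(1 / (4 * t)) * x ^ 2 := fun x => by ring
  simp_rw [heat1, h, integral_const_mul, integral_gaussian]
  rw [div_div_eq_mul_div, div_one, show π * (4 * t) = 4 * π * t by ring,
    inv_mul_cancel₀ (by positivity)]

lemma heat1_sub_mul_heat1 {s t : ℝ} (hs : 0 < s) (ht : 0 < t) (A z : ℝ) :
    heat1 s (A - z) * heat1 t z
      = heat1 (s + t) A * heat1 (s * t / (s + t)) (z - t * A / (s + t)) := by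
  simp only [heat1]
  rw [mul_mul_mul_comm, mul_mul_mul_comm _ (exp _), ← exp_add, ← exp_add, ← mul_inv,
    ← mul_inv, ← sqrt_mul (by positivity), ← sqrt_mul (by positivity)]
  congr 1
  · congr 2
    field_simp
  · congr 1
    field_simp
    ring

lemma heat1_const_mul {t k : ℝ} (hk : 0 < k) (x : ℝ) :
    heat1 t (k * x) = k⁻¹ * heat1 (t / k ^ 2) x := by
  have hsqrt : √(4 * π * (t / k ^ 2)) = √(4 * π * t) / k := by
    rw [← mul_div_assoc, sqrt_div' _ (by positivity), sqrt_sq hk.le]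
  simp only [heat1]
  rw [hsqrt, ← mul_assoc]
  congr 1
  · field_simp
  · congr 1
    field_simp

lemma integral_heat1_sub_mul_heat1 {s t : ℝ} (hs : 0 < s) (ht : 0 < t) (A : ℝ) :
    ∫ z, heat1 s (A - z) * heat1 t z = heat1 (s + t) A := by
  simp_rw [heat1_sub_mul_heat1 hs ht, integral_const_mul]
  rw [integral_sub_right_eq_self (heat1 _), integral_heat1 (by positivity), mul_one]

lemma integral_heat1_sub_mul_heat1_add_mul {v t k : ℝ} (hv : 0 < v) (ht : 0 < t) (hk : 0 < k)
    (m c : ℝ) :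
    ∫ z, heat1 v (z - m) * heat1 t (c + k * z) = heat1 (k ^ 2 * v + t) (c + k * m) := by
  -- after the substitution `u = z + c / k` the integral is a convolution
  have hshift : ∀ z, heat1 v (z - m) * heat1 t (c + k * z)
      = k⁻¹ * (heat1 v ((m + c / k) - (z + c / k)) * heat1 (t / k ^ 2) (z + c / k)) := by
    intro z
    rw [← heat1_neg, show c + k * z = k * (z + c / k) by field_simp; ring,
      heat1_const_mul hk]
    ring_nf
  simp_rw [hshift, integral_const_mul]
  rw [integral_add_right_eq_self (fun u => heat1 v ((m + c / k) - u) * heat1 (t / k ^ 2) u),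
    integral_heat1_sub_mul_heat1 hv (by positivity),
    show c + k * m = k * (m + c / k) by field_simp; ring, heat1_const_mul hk]
  congr 2
  field_simp

lemma integral_heat1_sub_mul_heat1_mul_heat1 {a b : ℝ} (ha : 0 < a) (hb : 0 < b) (Y c : ℝ) :
    ∫ z, heat1 a (Y - z) * heat1 b z * heat1 ((a ^ 3 + b ^ 3) / 12) (c + (a + b) / 2 * z)
      = heat1 (a + b) Y * heat1 ((a + b) ^ 3 / 12) (c + b / 2 * Y) := by
  simp_rw [heat1_sub_mul_heat1 ha hb, mul_assoc, integral_const_mul]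
  rw [integral_heat1_sub_mul_heat1_add_mul (by positivity) (by positivity) (by positivity)]
  congr 3
  · field_simp
    ring
  · field_simp

lemma heatG_eq_prod {n : ℕ} {t : ℝ} (ht : 0 < t) (w : Fin n → ℝ) :
    heatG n t w = ∏ i, heat1 t (w i) := by
  have hpow : (4 * π * t) ^ (-(n : ℝ) / 2) = (√(4 * π * t))⁻¹ ^ n := by
    rw [sqrt_eq_rpow, ← rpow_neg (by positivity), ← rpow_natCast, ← rpow_mul (by positivity)]
    ring_nf
  simp only [heatG, if_pos ht, hpow, heat1, Finset.prod_mul_distrib, Finset.prod_const,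
    Finset.card_univ, Fintype.card_fin]
  rw [← exp_sum, ← Finset.sum_div, ← Finset.sum_neg_distrib]

lemma heatG_nonneg (n : ℕ) (t : ℝ) (w : Fin n → ℝ) : 0 ≤ heatG n t w := by
  unfold heatG
  split_ifs
  · positivity
  · rfl

lemma heatG_le {n : ℕ} {t : ℝ} (ht : 0 < t) (w : Fin n → ℝ) :
    heatG n t w ≤ (4 * π * t) ^ (-(n : ℝ) / 2) := by
  rw [heatG, if_pos ht]
  refine mul_le_of_le_one_right (by positivity) (exp_le_one_iff.mpr ?_)
  exact div_nonpos_of_nonpos_of_nonneg (neg_nonpos.mpr (by positivity)) (by positivity)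

lemma continuous_heatG {n : ℕ} {t : ℝ} (ht : 0 < t) : Continuous (heatG n t) := by
  unfold heatG
  simp only [if_pos ht]
  fun_prop

lemma integrable_heatG {n : ℕ} {t : ℝ} (ht : 0 < t) : Integrable (heatG n t) := by
  rw [funext (heatG_eq_prod ht)]
  refine Integrable.fintype_prod (f := fun _ => heat1 t) fun _ => ?_
  refine ((integrable_exp_neg_mul_sq (b := 1 / (4 * t)) (by positivity)).const_mul
    (√(4 * π * t))⁻¹).congr (ae_of_all _ fun x => ?_)
  simp only [heat1]
  ring_nf

lemma integral_heatG_sub_mul_heatG {n : ℕ} {s t : ℝ} (hs : 0 < s) (ht : 0 < t)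
    (A : Fin n → ℝ) :
    ∫ z, heatG n s (A - z) * heatG n t z = heatG n (s + t) A := by
  simp_rw [heatG_eq_prod hs, heatG_eq_prod ht, heatG_eq_prod (add_pos hs ht),
    ← Finset.prod_mul_distrib, Pi.sub_apply]
  rw [integral_fintype_prod_volume_eq_prod (fun i u => heat1 s (A i - u) * heat1 t u)]
  simp_rw [integral_heat1_sub_mul_heat1 hs ht]

lemma integral_heatG_sub_mul_heatG_mul_heatG {n : ℕ} {a b : ℝ} (ha : 0 < a) (hb : 0 < b)
    (Y C : Fin n → ℝ) :
    ∫ z, heatG n a (Y - z) * heatG n b z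
        * heatG n ((a ^ 3 + b ^ 3) / 12) (C + ((a + b) / 2) • z)
      = heatG n (a + b) Y * heatG n ((a + b) ^ 3 / 12) (C + (b / 2) • Y) := by
  simp_rw [heatG_eq_prod ha, heatG_eq_prod hb, heatG_eq_prod (add_pos ha hb),
    heatG_eq_prod (by positivity : (0 : ℝ) < (a ^ 3 + b ^ 3) / 12),
    heatG_eq_prod (by positivity : (0 : ℝ) < (a + b) ^ 3 / 12),
    ← Finset.prod_mul_distrib, Pi.sub_apply, Pi.add_apply, Pi.smul_apply, smul_eq_mul]
  rw [integral_fintype_prod_volume_eq_prod (fun i u => heat1 a (Y i - u) * heat1 b u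
    * heat1 ((a ^ 3 + b ^ 3) / 12) (C i + (a + b) / 2 * u))]
  simp_rw [integral_heat1_sub_mul_heat1_mul_heat1 ha hb]

lemma K0_gmul_neg_mul_K0 {n : ℕ} (y : Pt n) (z0 : ℝ) (z' z'' : Fin n → ℝ) :
    K0 n (gmul (-(z0, z', z'')) y) * K0 n (z0, z', z'')
      = heatG n (y.1 - z0) (y.2.1 - z') * heatG n z0 z'
        * (heatG n ((y.1 - z0) ^ 3 / 12) (y.2.2 - (z0 / 2) • y.2.1 + (y.1 / 2) • z' - z'')
          * heatG n (z0 ^ 3 / 12) z'') := by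
  have hpt : gmul (-(z0, z', z'')) y
      = (y.1 - z0, y.2.1 - z', y.2.2 - (z0 / 2) • y.2.1 + (y.1 / 2) • z' - z'') := by
    simp only [gmul, Prod.neg_mk, Prod.mk.injEq]
    refine ⟨by ring, by abel, by module⟩
  rw [hpt, K0, K0]
  ring

lemma integrable_heatG_mul_heatG_prod {n : ℕ} {a b s t : ℝ} (ha : 0 < a) (hb : 0 < b)
    (hs : 0 < s) (ht : 0 < t) (Y C : Fin n → ℝ) (c : ℝ) :
    Integrable (fun z : (Fin n → ℝ) × (Fin n → ℝ) =>
      heatG n a (Y - z.1) * heatG n b z.1 * (heatG n s (C + c • z.1 - z.2) * heatG n t z.2))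
      (volume.prod volume) := by
  have hbdd : ∀ z : (Fin n → ℝ) × (Fin n → ℝ),
      ‖heatG n a (Y - z.1) * heatG n s (C + c • z.1 - z.2)‖
        ≤ (4 * π * a) ^ (-(n : ℝ) / 2) * (4 * π * s) ^ (-(n : ℝ) / 2) := by
    intro z
    rw [norm_of_nonneg (mul_nonneg (heatG_nonneg _ _ _) (heatG_nonneg _ _ _))]
    exact mul_le_mul (heatG_le ha _) (heatG_le hs _) (heatG_nonneg _ _ _) (by positivity)
  have hcont : Continuous fun z : (Fin n → ℝ) × (Fin n → ℝ) =>
      heatG n a (Y - z.1) * heatG n s (C + c • z.1 - z.2) :=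
    ((continuous_heatG ha).comp (by fun_prop)).mul ((continuous_heatG hs).comp (by fun_prop))
  refine (((integrable_heatG hb).mul_prod (integrable_heatG ht)).bdd_mul
    hcont.aestronglyMeasurable (ae_of_all _ hbdd)).congr (ae_of_all _ fun z => ?_)
  ring

/-- The reproducing identity: for `0 < z₀ < y₀`,
`∫ K₀(z⁻¹⬝y) K₀(z) dz' dz'' = K₀(y)`, where `z = (z₀,z',z'')` and `z⁻¹ = -z`. -/
theorem statement2 (n : ℕ) (y : Pt n) (z0 : ℝ) (h0 : 0 < z0) (h1 : z0 < y.1) :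
    ∫ z : (Fin n → ℝ) × (Fin n → ℝ),
        K0 n (gmul (-(z0, z.1, z.2)) y) * K0 n (z0, z.1, z.2)
      = K0 n y := by
  have ha : 0 < y.1 - z0 := sub_pos.mpr h1
  simp_rw [K0_gmul_neg_mul_K0]
  rw [Measure.volume_eq_prod, integral_prod _ (integrable_heatG_mul_heatG_prod ha h0
    (by positivity) (by positivity) _ _ _)]
  have hs : 0 < (y.1 - z0) ^ 3 / 12 := by positivity
  have ht : 0 < z0 ^ 3 / 12 := by positivity
  simp_rw [integral_const_mul, integral_heatG_sub_mul_heatG hs ht, ← add_div]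
  have htriple := integral_heatG_sub_mul_heatG_mul_heatG ha h0 y.2.1 (y.2.2 - (z0 / 2) • y.2.1)
  rw [sub_add_cancel] at htriple
  rw [htriple, sub_add_cancel, K0]
end
end

section
/- Let f ∈ C([0,∞)) and F(t) = ∫_0^t f(s) ds. Then for every y=(y0,y',y'')∈ℝ^{2n+1} with y0 > 0, ∫_{ℝ^{2n+1}} K_0(z^{-1}·y) f(z0) K_0(z) dz = F(y0)·K_0(y), where the integrand is supported in {0 < z0 < y0} since K_0 vanishes for nonpositive time variable. -/
open MeasureTheory Real Filter Topology

noncomputable section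

/-!
Slice the integral at the time `z₀ = s`; since `K₀` vanishes at nonpositive time, only
`0 < s < y₀` contributes. For such `s` the spatial integral of `K₀(z⁻¹⬝y) K₀(z)` equals
`K₀(y)`: integrating out `z''` is the semigroup law `G_a * G_b = G_{a+b}` with
`a + b = (y₀ - s)³/12 + s³/12`, and the remaining `z'`-integral is a Gaussian integral whose
exponent, after completing the square, is exactly that of `G_{y₀}(y') G_{y₀³/12}(y'')`.
All kernels factor over the coordinates, so only one-dimensional Gaussian integrals occur.
Integrating `f(s) K₀(y)` over `(0, y₀)` then gives `F(y₀) K₀(y)`.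
-/

lemma integral_comp_fst_mul_of_integral_slice {α β : Type*} [MeasurableSpace α]
    [MeasurableSpace β] {μ : Measure α} {ν : Measure β} [SFinite μ] [SFinite ν]
    {φ : α → ℝ} {Ψ : α × β → ℝ} {S : Set α} {c : ℝ} (hS : MeasurableSet S)
    (hφ : IntegrableOn φ S μ) (hΨm : AEStronglyMeasurable Ψ (μ.prod ν)) (hΨ : 0 ≤ Ψ)
    (hΨS : ∀ p, p.1 ∉ S → Ψ p = 0) (hint : ∀ a ∈ S, Integrable (fun b => Ψ (a, b)) ν)
    (hc : ∀ a ∈ S, ∫ b, Ψ (a, b) ∂ν = c) :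
    ∫ p, φ p.1 * Ψ p ∂(μ.prod ν) = (∫ a in S, φ a ∂μ) * c := by
  set φS := S.indicator φ
  have hφS : Integrable φS μ := (integrable_indicator_iff hS).2 hφ
  have hind : (fun p : α × β => φ p.1 * Ψ p) = fun p => φS p.1 * Ψ p := by
    ext p
    by_cases hp : p.1 ∈ S
    · simp only [φS, Set.indicator_of_mem hp]
    · rw [hΨS p hp, mul_zero, mul_zero]
  have hslice : ∀ a, ∫ b, φS a * Ψ (a, b) ∂ν = φS a * c := fun a => by
    by_cases ha : a ∈ S
    · rw [integral_const_mul, hc a ha]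
    · simp [φS, Set.indicator_of_notMem ha]
  have hslice_norm : ∀ a, ∫ b, ‖φS a * Ψ (a, b)‖ ∂ν = ‖φS a‖ * c := fun a => by
    simp only [norm_mul, Real.norm_of_nonneg (hΨ _), integral_const_mul]
    by_cases ha : a ∈ S
    · rw [hc a ha]
    · simp [φS, Set.indicator_of_notMem ha]
  have hprod : Integrable (fun p : α × β => φS p.1 * Ψ p) (μ.prod ν) := by
    refine (integrable_prod_iff (f := fun p : α × β => φS p.1 * Ψ p)
      (hφS.aestronglyMeasurable.comp_fst.mul hΨm)).2 ⟨?_, ?_⟩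
    · refine .of_forall fun a => ?_
      by_cases ha : a ∈ S
      · exact (hint a ha).const_mul (φS a)
      · simp [φS, Set.indicator_of_notMem ha]
    · simpa only [hslice_norm] using hφS.norm.mul_const c
  rw [hind, integral_prod _ hprod]
  simp only [hslice, integral_mul_const, φS, integral_indicator hS]

namespace HeatKernel

lemma integrable_exp_neg_quadratic_and_integral {α β γ : ℝ} (hα : 0 < α) :
    Integrable (fun u : ℝ => exp (-(α * u ^ 2 + β * u + γ))) ∧
      ∫ u : ℝ, exp (-(α * u ^ 2 + β * u + γ))
        = √(π / α) * exp (β ^ 2 / (4 * α) - γ) := by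
  have hsq : ∀ u : ℝ, exp (-(α * u ^ 2 + β * u + γ))
      = exp (β ^ 2 / (4 * α) - γ) * exp (-α * (u + β / (2 * α)) ^ 2) := fun u => by
    rw [← exp_add]; congr 1; field_simp; ring
  simp_rw [hsq]
  refine ⟨((integrable_exp_neg_mul_sq hα).comp_add_right _).const_mul _, ?_⟩
  rw [integral_const_mul, integral_add_right_eq_self (fun u => exp (-α * u ^ 2)),
    integral_gaussian, mul_comm]

lemma integrable_and_integral_of_eq_exp_neg_quadratic_div_sqrt {F : ℝ → ℝ} {α β γ D : ℝ}
    (hα : 0 < α) (hD : 0 ≤ D) (hF : ∀ u, F u = exp (-(α * u ^ 2 + β * u + γ)) / √D) :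
    Integrable F ∧ ∫ u, F u = exp (β ^ 2 / (4 * α) - γ) / √(D * α / π) := by
  obtain ⟨hint, hval⟩ := integrable_exp_neg_quadratic_and_integral (β := β) (γ := γ) hα
  simp_rw [funext hF, div_eq_mul_inv _ (√D)]
  refine ⟨hint.mul_const _, ?_⟩
  rw [integral_mul_const, hval, mul_div_assoc, sqrt_mul hD, ← inv_div π α, sqrt_inv]
  field_simp

def gauss (t x : ℝ) : ℝ := exp (-x ^ 2 / (4 * t)) / √(4 * π * t)

lemma gauss_mul_gauss {s t : ℝ} (hs : 0 ≤ s) (x y : ℝ) :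
    gauss s x * gauss t y
      = exp (-x ^ 2 / (4 * s) + -y ^ 2 / (4 * t)) / √(4 * π * s * (4 * π * t)) := by
  rw [gauss, gauss, div_mul_div_comm, ← exp_add, ← sqrt_mul (by positivity)]

lemma gauss_conv_gauss {s t : ℝ} (hs : 0 < s) (ht : 0 < t) (c : ℝ) :
    Integrable (fun w => gauss s (c - w) * gauss t w) ∧
      ∫ w, gauss s (c - w) * gauss t w = gauss (s + t) c := by
  obtain ⟨hint, hval⟩ := integrable_and_integral_of_eq_exp_neg_quadratic_div_sqrt
    (F := fun w => gauss s (c - w) * gauss t w)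
    (α := 1 / (4 * s) + 1 / (4 * t)) (β := -(c / (2 * s))) (γ := c ^ 2 / (4 * s))
    (D := 4 * π * s * (4 * π * t))
    (by positivity) (by positivity) fun w => by
      rw [gauss_mul_gauss hs.le]; congr 2; field_simp; ring
  refine ⟨hint, hval.trans ?_⟩
  rw [gauss]
  congr 2 <;> field_simp <;> ring

lemma gauss_triple {s y₀ : ℝ} (hs : 0 < s) (hsy : s < y₀) (a b : ℝ) :
    Integrable (fun u => gauss (y₀ - s) (a - u) * gauss s u
        * gauss ((y₀ - s) ^ 3 / 12 + s ^ 3 / 12) (b - s / 2 * a + y₀ / 2 * u)) ∧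
      ∫ u, gauss (y₀ - s) (a - u) * gauss s u
        * gauss ((y₀ - s) ^ 3 / 12 + s ^ 3 / 12) (b - s / 2 * a + y₀ / 2 * u)
        = gauss y₀ a * gauss (y₀ ^ 3 / 12) b := by
  have hr : 0 < y₀ - s := sub_pos.2 hsy
  set T := (y₀ - s) ^ 3 / 12 + s ^ 3 / 12
  obtain ⟨hint, hval⟩ := integrable_and_integral_of_eq_exp_neg_quadratic_div_sqrt
    (F := fun u => gauss (y₀ - s) (a - u) * gauss s u * gauss T (b - s / 2 * a + y₀ / 2 * u))
    (α := 1 / (4 * (y₀ - s)) + 1 / (4 * s) + y₀ ^ 2 / (16 * T))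
    (β := -(a / (2 * (y₀ - s))) + (b - s / 2 * a) * y₀ / (4 * T))
    (γ := a ^ 2 / (4 * (y₀ - s)) + (b - s / 2 * a) ^ 2 / (4 * T))
    (D := 4 * π * (y₀ - s) * (4 * π * s) * (4 * π * T))
    (by positivity) (by positivity) fun u => by
      rw [gauss_mul_gauss hr.le, gauss, div_mul_div_comm, ← exp_add,
        ← sqrt_mul (by positivity) (4 * π * T)]
      congr 2; field_simp; ring
  refine ⟨hint, hval.trans ?_⟩
  have hy₀ : 0 < y₀ := hs.trans hsy
  rw [gauss_mul_gauss hy₀.le]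
  congr 2 <;> simp only [T] <;> field_simp <;> ring

lemma heatG_eq_prod_gauss {n : ℕ} {t : ℝ} (ht : 0 < t) (w : Fin n → ℝ) :
    heatG n t w = ∏ i, gauss t (w i) := by
  have hsqrt : (4 * π * t) ^ (-(n : ℝ) / 2) = (√(4 * π * t) ^ n)⁻¹ := by
    rw [sqrt_eq_rpow, ← rpow_natCast, ← rpow_mul (by positivity), ← rpow_neg (by positivity)]
    ring_nf
  simp only [heatG, if_pos ht, gauss, Finset.prod_div_distrib, ← exp_sum, Finset.prod_const,
    Finset.card_univ, Fintype.card_fin, hsqrt, ← Finset.sum_div, Finset.sum_neg_distrib]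
  ring

lemma heatG_nonneg (n : ℕ) (t : ℝ) (w : Fin n → ℝ) : 0 ≤ heatG n t w := by
  unfold heatG; split_ifs <;> positivity

lemma heatG_of_nonpos {n : ℕ} {t : ℝ} (ht : t ≤ 0) (w : Fin n → ℝ) : heatG n t w = 0 :=
  if_neg ht.not_gt

lemma measurable_heatG (n : ℕ) :
    Measurable fun p : ℝ × (Fin n → ℝ) => heatG n p.1 p.2 := by
  unfold heatG
  exact Measurable.ite (measurableSet_lt measurable_const measurable_fst) (by fun_prop)
    measurable_const

variable {n : ℕ}

lemma heatG_sub_mul_heatG_eq_prod {s t : ℝ} (hs : 0 < s) (ht : 0 < t) (c w : Fin n → ℝ) :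
    heatG n s (c - w) * heatG n t w = ∏ i, gauss s (c i - w i) * gauss t (w i) := by
  rw [heatG_eq_prod_gauss hs, heatG_eq_prod_gauss ht, ← Finset.prod_mul_distrib]
  rfl

lemma integrable_heatG_sub_mul_heatG {s t : ℝ} (hs : 0 < s) (ht : 0 < t) (c : Fin n → ℝ) :
    Integrable fun w => heatG n s (c - w) * heatG n t w := by
  simp_rw [heatG_sub_mul_heatG_eq_prod hs ht]
  exact Integrable.fintype_prod (f := fun i w => gauss s (c i - w) * gauss t w)
    fun i => (gauss_conv_gauss hs ht (c i)).1

lemma integral_heatG_sub_mul_heatG {s t : ℝ} (hs : 0 < s) (ht : 0 < t) (c : Fin n → ℝ) :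
    ∫ w, heatG n s (c - w) * heatG n t w = heatG n (s + t) c := by
  simp_rw [heatG_sub_mul_heatG_eq_prod hs ht, heatG_eq_prod_gauss (add_pos hs ht)]
  rw [volume_pi,
    integral_fintype_prod_eq_prod (f := fun i w => gauss s (c i - w) * gauss t w)]
  exact Finset.prod_congr rfl fun i _ => (gauss_conv_gauss hs ht (c i)).2

lemma heatG_triple_eq_prod {s y₀ : ℝ} (hs : 0 < s) (hsy : s < y₀) (a b u : Fin n → ℝ) :
    heatG n (y₀ - s) (a - u) * heatG n s u
        * heatG n ((y₀ - s) ^ 3 / 12 + s ^ 3 / 12) (b - (s / 2) • a + (y₀ / 2) • u)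
      = ∏ i, gauss (y₀ - s) (a i - u i) * gauss s (u i)
        * gauss ((y₀ - s) ^ 3 / 12 + s ^ 3 / 12) (b i - s / 2 * a i + y₀ / 2 * u i) := by
  have hr : 0 < y₀ - s := sub_pos.2 hsy
  rw [heatG_eq_prod_gauss hr, heatG_eq_prod_gauss hs, heatG_eq_prod_gauss (by positivity),
    ← Finset.prod_mul_distrib, ← Finset.prod_mul_distrib]
  rfl

lemma integrable_heatG_triple {s y₀ : ℝ} (hs : 0 < s) (hsy : s < y₀) (a b : Fin n → ℝ) :
    Integrable fun u => heatG n (y₀ - s) (a - u) * heatG n s u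
        * heatG n ((y₀ - s) ^ 3 / 12 + s ^ 3 / 12) (b - (s / 2) • a + (y₀ / 2) • u) := by
  simp_rw [heatG_triple_eq_prod hs hsy a b]
  exact Integrable.fintype_prod (f := fun i u => gauss (y₀ - s) (a i - u) * gauss s u
      * gauss ((y₀ - s) ^ 3 / 12 + s ^ 3 / 12) (b i - s / 2 * a i + y₀ / 2 * u))
    fun i => (gauss_triple hs hsy (a i) (b i)).1

lemma integral_heatG_triple {s y₀ : ℝ} (hs : 0 < s) (hsy : s < y₀) (a b : Fin n → ℝ) :
    ∫ u, heatG n (y₀ - s) (a - u) * heatG n s u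
        * heatG n ((y₀ - s) ^ 3 / 12 + s ^ 3 / 12) (b - (s / 2) • a + (y₀ / 2) • u)
      = heatG n y₀ a * heatG n (y₀ ^ 3 / 12) b := by
  have hy₀ : 0 < y₀ := hs.trans hsy
  simp_rw [heatG_triple_eq_prod hs hsy a b]
  rw [volume_pi, integral_fintype_prod_eq_prod (f := fun i u => gauss (y₀ - s) (a i - u)
      * gauss s u * gauss ((y₀ - s) ^ 3 / 12 + s ^ 3 / 12) (b i - s / 2 * a i + y₀ / 2 * u)),
    heatG_eq_prod_gauss hy₀, heatG_eq_prod_gauss (by positivity), ← Finset.prod_mul_distrib]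
  exact Finset.prod_congr rfl fun i _ => (gauss_triple hs hsy (a i) (b i)).2

lemma K0_nonneg (y : Pt n) : 0 ≤ K0 n y :=
  mul_nonneg (heatG_nonneg _ _ _) (heatG_nonneg _ _ _)

lemma measurable_K0 : Measurable (K0 n) :=
  ((measurable_heatG n).comp (measurable_fst.prodMk measurable_snd.fst)).mul
    ((measurable_heatG n).comp
      (((measurable_fst.pow_const 3).div_const 12).prodMk measurable_snd.snd))

lemma K0_of_nonpos {y : Pt n} (hy : y.1 ≤ 0) : K0 n y = 0 := by
  rw [K0, heatG_of_nonpos hy, zero_mul]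

lemma measurable_K0_gmul_neg_mul_K0 (y : Pt n) :
    Measurable fun z : Pt n => K0 n (gmul (-z) y) * K0 n z :=
  (measurable_K0.comp (by unfold gmul; fun_prop)).mul measurable_K0

lemma K0_gmul_neg_mul_K0 (y : Pt n) (s : ℝ) (u w : Fin n → ℝ) :
    K0 n (gmul (-(s, u, w)) y) * K0 n (s, u, w)
      = heatG n (y.1 - s) (y.2.1 - u) * heatG n s u
        * (heatG n ((y.1 - s) ^ 3 / 12) (y.2.2 - (s / 2) • y.2.1 + (y.1 / 2) • u - w)
          * heatG n (s ^ 3 / 12) w) := by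
  have hgmul : gmul (-(s, u, w)) y
      = (y.1 - s, y.2.1 - u, y.2.2 - (s / 2) • y.2.1 + (y.1 / 2) • u - w) := by
    simp only [gmul, Prod.neg_mk, Prod.mk.injEq]
    refine ⟨by ring, by abel, ?_⟩
    ext i
    simp only [Pi.add_apply, Pi.sub_apply, Pi.neg_apply, Pi.smul_apply, smul_eq_mul]
    ring
  rw [hgmul, K0, K0]
  ring

lemma K0_gmul_neg_mul_K0_eq_zero {y z : Pt n} (hz : z.1 ∉ Set.Ioo 0 y.1) :
    K0 n (gmul (-z) y) * K0 n z = 0 := by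
  rcases le_or_gt z.1 0 with h | h
  · rw [K0_of_nonpos h, mul_zero]
  · have : (gmul (-z) y).1 ≤ 0 := by
      simp only [gmul, Prod.fst_neg]
      linarith [le_of_not_gt fun h' => hz ⟨h, h'⟩]
    rw [K0_of_nonpos this, zero_mul]

lemma integrable_K0_gmul_neg_mul_K0_slice {y : Pt n} {s : ℝ} (hs : 0 < s) (hsy : s < y.1) :
    Integrable fun x : (Fin n → ℝ) × (Fin n → ℝ) =>
      K0 n (gmul (-(s, x)) y) * K0 n (s, x) := by
  have hr : 0 < y.1 - s := sub_pos.2 hsy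
  have hmeas : Measurable fun x : (Fin n → ℝ) × (Fin n → ℝ) =>
      K0 n (gmul (-(s, x)) y) * K0 n (s, x) :=
    (measurable_K0_gmul_neg_mul_K0 y).comp measurable_prodMk_left
  rw [Measure.volume_eq_prod, integrable_prod_iff hmeas.aestronglyMeasurable]
  simp only [K0_gmul_neg_mul_K0]
  refine ⟨.of_forall fun u =>
    (integrable_heatG_sub_mul_heatG (by positivity) (by positivity) _).const_mul _, ?_⟩
  simp only [norm_mul, Real.norm_of_nonneg (heatG_nonneg _ _ _), integral_const_mul,
    integral_heatG_sub_mul_heatG (n := n) (show 0 < (y.1 - s) ^ 3 / 12 by positivity)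
      (show 0 < s ^ 3 / 12 by positivity)]
  exact integrable_heatG_triple hs hsy y.2.1 y.2.2

lemma integral_K0_gmul_neg_mul_K0_slice {y : Pt n} {s : ℝ} (hs : 0 < s) (hsy : s < y.1) :
    ∫ x : (Fin n → ℝ) × (Fin n → ℝ), K0 n (gmul (-(s, x)) y) * K0 n (s, x) = K0 n y := by
  have hr : 0 < y.1 - s := sub_pos.2 hsy
  have hint := integrable_K0_gmul_neg_mul_K0_slice hs hsy (y := y)
  rw [Measure.volume_eq_prod] at hint ⊢
  rw [integral_prod _ hint]
  simp only [K0_gmul_neg_mul_K0, integral_const_mul,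
    integral_heatG_sub_mul_heatG (n := n) (show 0 < (y.1 - s) ^ 3 / 12 by positivity)
      (show 0 < s ^ 3 / 12 by positivity)]
  exact integral_heatG_triple hs hsy y.2.1 y.2.2

end HeatKernel

open HeatKernel

/-- For `f ∈ C([0,∞))` and `F(t) = ∫₀ᵗ f`, one has
`∫ K₀(z⁻¹⬝y) f(z₀) K₀(z) dz = F(y₀) K₀(y)` whenever `y₀ > 0`. -/
theorem statement3 (n : ℕ) (f : ℝ → ℝ) (hf : ContinuousOn f (Set.Ici 0))
    (y : Pt n) (hy : 0 < y.1) :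
    ∫ z : Pt n, K0 n (gmul (-z) y) * f z.1 * K0 n z
      = (∫ s in (0 : ℝ)..y.1, f s) * K0 n y := by
  have hfi : IntegrableOn f (Set.Ioo 0 y.1) :=
    ((hf.mono Set.Icc_subset_Ici_self).integrableOn_Icc).mono_set Set.Ioo_subset_Icc_self
  calc ∫ z : Pt n, K0 n (gmul (-z) y) * f z.1 * K0 n z
      = ∫ z : Pt n, f z.1 * (K0 n (gmul (-z) y) * K0 n z) := by
        congr 1; ext z; ring
    _ = (∫ s in Set.Ioo 0 y.1, f s) * K0 n y := by
        rw [Measure.volume_eq_prod]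
        exact integral_comp_fst_mul_of_integral_slice measurableSet_Ioo hfi
          (measurable_K0_gmul_neg_mul_K0 y).aestronglyMeasurable
          (fun z => mul_nonneg (K0_nonneg _) (K0_nonneg _))
          (fun z hz => K0_gmul_neg_mul_K0_eq_zero hz)
          (fun s hs => integrable_K0_gmul_neg_mul_K0_slice hs.1 hs.2)
          (fun s hs => integral_K0_gmul_neg_mul_K0_slice hs.1 hs.2)
    _ = (∫ s in (0 : ℝ)..y.1, f s) * K0 n y := by
        rw [intervalIntegral.integral_of_le hy.le, integral_Ioc_eq_integral_Ioo]

end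
end
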